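/- In the construction for the (⇒) direction of Lemma 3.1, for every subformula θ of φ and every point x̄ ∈ W̄′ ∩ R̄^{≤md φ − md θ}(ū): 𝔉′, x̄ ⊨^{v′} θ if and only if 𝔉, x̄ ⊨ᵛ σ(θ). -/

import Mathlib

namespace ModalProducts

/-- `N`-modal formulas over propositional variables indexed by `ℕ`
(the variable `pₖ` is `var k`; the extra variable `p` is `var 0`). -/
inductive MF (N : ℕ) : Type
  | var : ℕ → MF N
  | bot : MF N
  | and : MF N → MF N → MF N
  | or  : MF N → MF N → MF N
  | imp : MF N → MF N → MF N
  | box : Fin N → MF N → MF N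
deriving DecidableEq

namespace MF

variable {N : ℕ}

/-- negation: `¬ψ = ψ → ⊥`. -/
def neg (φ : MF N) : MF N := imp φ bot

/-- diamond: `◇ᵢψ = ¬□ᵢ¬ψ`. -/
def dia (i : Fin N) (φ : MF N) : MF N := neg (box i (neg φ))

/-- modal depth. -/
def md : MF N → ℕ
  | var _ => 0
  | bot => 0
  | and φ ψ => max (md φ) (md ψ)
  | or φ ψ => max (md φ) (md ψ)
  | imp φ ψ => max (md φ) (md ψ)
  | box _ φ => md φ + 1

/-- length (number of symbols; the variable `pₖ` counts as `k+1` symbols,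
accounting for the subscript). -/
def len : MF N → ℕ
  | var q => q + 1
  | bot => 1
  | and φ ψ => len φ + len ψ + 1
  | or φ ψ => len φ + len ψ + 1
  | imp φ ψ => len φ + len ψ + 1
  | box _ φ => len φ + 1

/-- the set of propositional variables occurring in a formula. -/
def vars : MF N → Set ℕ
  | var q => {q}
  | bot => ∅
  | and φ ψ => vars φ ∪ vars ψ
  | or φ ψ => vars φ ∪ vars ψ
  | imp φ ψ => vars φ ∪ vars ψ
  | box _ φ => vars φ

/-- the largest index of a variable occurring in a formula (0 if none). -/
def maxVar : MF N → ℕ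
  | var q => q
  | bot => 0
  | and φ ψ => max (maxVar φ) (maxVar ψ)
  | or φ ψ => max (maxVar φ) (maxVar ψ)
  | imp φ ψ => max (maxVar φ) (maxVar ψ)
  | box _ φ => maxVar φ

/-- the list of subformulas of a formula. -/
def subfs : MF N → List (MF N)
  | var q => [var q]
  | bot => [bot]
  | and φ ψ => and φ ψ :: (subfs φ ++ subfs ψ)
  | or φ ψ => or φ ψ :: (subfs φ ++ subfs ψ)
  | imp φ ψ => imp φ ψ :: (subfs φ ++ subfs ψ)
  | box i φ => box i φ :: subfs φ

/-- uniform substitution of formulas for variables. -/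
def subst (s : ℕ → MF N) : MF N → MF N
  | var q => s q
  | bot => bot
  | and φ ψ => and (subst s φ) (subst s ψ)
  | or φ ψ => or (subst s φ) (subst s ψ)
  | imp φ ψ => imp (subst s φ) (subst s ψ)
  | box i φ => box i (subst s φ)

end MF

/-- `θ` is a subformula of `φ`. -/
def Subformula {N : ℕ} (θ φ : MF N) : Prop := θ ∈ φ.subfs

/-- A Kripke `N`-frame: a nonempty set of points with `N` accessibility relations. -/
structure Frame (N : ℕ) where
  W : Type
  nonempty : Nonempty W
  R : Fin N → W → W → Prop

/-- Truth of a formula at a point of a frame under a valuation. -/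
def Sat {N : ℕ} (F : Frame N) (v : ℕ → Set F.W) : F.W → MF N → Prop
  | x, .var q => x ∈ v q
  | _, .bot => False
  | x, .and φ ψ => Sat F v x φ ∧ Sat F v x ψ
  | x, .or φ ψ => Sat F v x φ ∨ Sat F v x ψ
  | x, .imp φ ψ => Sat F v x φ → Sat F v x ψ
  | x, .box i φ => ∀ y, F.R i x y → Sat F v y φ

/-- Validity of a formula in a frame: truth at every point under every valuation. -/
def Valid {N : ℕ} (F : Frame N) (φ : MF N) : Prop := ∀ (v : ℕ → Set F.W) (x : F.W), Sat F v x φ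

/-- A set of formulas is valid in a frame if all of its members are. -/
def ValidSet {N : ℕ} (F : Frame N) (L : Set (MF N)) : Prop := ∀ φ ∈ L, Valid F φ

/-- The logic of a class of frames. -/
def Logic {N : ℕ} (C : Set (Frame N)) : Set (MF N) := {φ | ∀ F ∈ C, Valid F φ}

/-- A logic is Kripke complete if it is the logic of some nonempty class of frames. -/
def KripkeComplete {N : ℕ} (L : Set (MF N)) : Prop :=
  ∃ C : Set (Frame N), C.Nonempty ∧ L = Logic C

/-- The product of `N` 1-frames. -/
def prodFrame {N : ℕ} (Fs : Fin N → Frame 1) : Frame N where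
  W := ∀ i, (Fs i).W
  nonempty := ⟨fun i => (Fs i).nonempty.some⟩
  R := fun i x y => (Fs i).R 0 (x i) (y i) ∧ ∀ k, k ≠ i → x k = y k

/-- The product of `N` Kripke complete monomodal logics: the logic of the class of
products of frames of the factors. -/
def productLogic {N : ℕ} (Ls : Fin N → Set (MF 1)) : Set (MF N) :=
  Logic {F | ∃ Fs : Fin N → Frame 1, (∀ i, ValidSet (Fs i) (Ls i)) ∧ F = prodFrame Fs}

/-- A 1-frame is reflexive. -/
def ReflexiveFrame (F : Frame 1) : Prop := ∀ x, F.R 0 x x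

/-- The logic `T` of all reflexive 1-frames. -/
def logicT : Set (MF 1) := Logic {F | ReflexiveFrame F}

/-- The logic `K` of all 1-frames. -/
def logicK : Set (MF 1) := Logic Set.univ

/-- The logic `S5` of all 1-frames whose relation is an equivalence. -/
def logicS5 : Set (MF 1) := Logic {F | Equivalence (F.R 0)}

section Translation

variable {n : ℕ}

/-- the variable `p`. -/
def pv : MF (n+1) := .var 0

/-- `◆₁ψ = ◇₁(¬p ∧ ◇₁(p ∧ ψ))`. -/
def blackDia (ψ : MF (n+1)) : MF (n+1) :=
  MF.dia 0 (.and (MF.neg pv) (MF.dia 0 (.and pv ψ)))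

/-- `α_k = ◆₁ᵏ □₁ p`. -/
def alphaF (k : ℕ) : MF (n+1) := blackDia^[k] (.box 0 pv)

/-- `β_k = ¬p ∧ ◇₁(p ∧ α_k)`. -/
def betaF (k : ℕ) : MF (n+1) := .and (MF.neg pv) (MF.dia 0 (.and pv (alphaF k)))

/-- `B = β_{m+1}`. -/
def Bf (m : ℕ) : MF (n+1) := betaF (m+1)

/-- The translation `σ`: `σ(p_k) = β_k`, `σ(⊥) = ⊥`, `σ` commutes with `∧, ∨, →`,
and `σ(□ᵢψ) = □ᵢ(B → σ(ψ))`. -/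
def sigmaT (m : ℕ) : MF (n+1) → MF (n+1)
  | .var k => betaF k
  | .bot => .bot
  | .and φ ψ => .and (sigmaT m φ) (sigmaT m ψ)
  | .or φ ψ => .or (sigmaT m φ) (sigmaT m ψ)
  | .imp φ ψ => .imp (sigmaT m φ) (sigmaT m ψ)
  | .box i φ => .box i (.imp (Bf m) (sigmaT m φ))

/-- conjunction of a head formula with a list of formulas. -/
def bigAnd (ψ : MF (n+1)) (l : List (MF (n+1))) : MF (n+1) := l.foldl .and ψ

/-- `□^{≤k}`: `□^{≤0}ψ = ψ`, `□^{≤k+1}ψ = □^{≤k}ψ ∧ □₁□^{≤k}ψ ∧ … ∧ □ₙ□^{≤k}ψ`. -/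
def boxLe : ℕ → MF (n+1) → MF (n+1)
  | 0, ψ => ψ
  | k+1, ψ => bigAnd (boxLe k ψ) (List.ofFn fun i : Fin (n+1) => .box i (boxLe k ψ))

/-- `□₋₁^{≤k}`: like `□^{≤k}` but using only `□₂, …, □ₙ`. -/
def boxLeTail : ℕ → MF (n+1) → MF (n+1)
  | 0, ψ => ψ
  | k+1, ψ => bigAnd (boxLeTail k ψ) (List.ofFn fun i : Fin n => .box i.succ (boxLeTail k ψ))

/-- `◇₋₁^{≤k}ψ = ¬□₋₁^{≤k}¬ψ`. -/
def diaLeTail (k : ℕ) (ψ : MF (n+1)) : MF (n+1) := MF.neg (boxLeTail k (MF.neg ψ))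

/-- `A = B ∧ □^{≤md φ}(B → □₋₁^{≤md φ}B) ∧ □^{≤md φ}(◇₋₁^{≤md φ}B → B)`. -/
def Af (m : ℕ) (φ : MF (n+1)) : MF (n+1) :=
  .and (Bf m)
    (.and (boxLe φ.md (.imp (Bf m) (boxLeTail φ.md (Bf m))))
          (boxLe φ.md (.imp (diaLeTail φ.md (Bf m)) (Bf m))))

end Translation

end ModalProducts
namespace ModalProducts

section Restriction

variable {n : ℕ}

/-- `R̄^{≤k}`: `R̄^{≤0}` is the identity, and
`R̄^{≤k+1} = R̄^{≤k} ∪ R̄₁ ∘ R̄^{≤k} ∪ … ∪ R̄ₙ ∘ R̄^{≤k}`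
(reachability in at most `k` steps along the relations of the frame). -/
def RleAll {N : ℕ} (F : Frame N) : ℕ → F.W → F.W → Prop
  | 0 => fun x y => x = y
  | k+1 => fun x y => RleAll F k x y ∨ ∃ (i : Fin N) (z : F.W), F.R i x z ∧ RleAll F k z y

/-- `R̄₋₁^{≤k}`: reachability in at most `k` steps along `R̄₂, …, R̄ₙ` only. -/
def RleTail (F : Frame (n+1)) : ℕ → F.W → F.W → Prop
  | 0 => fun x y => x = y
  | k+1 => fun x y =>
      RleTail F k x y ∨ ∃ (i : Fin n) (z : F.W), F.R i.succ x z ∧ RleTail F k z y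

/-- The set `W′₁ = {x₁ ∈ W₁ : 𝔉, x̄ ⊨ᵛ B and x̄ ∈ R̄^{≤d}(ū)` for some `x̄ ∈ W̄` with first
coordinate `x₁}`. -/
def restrSet (Fs : Fin (n+1) → Frame 1) (m d : ℕ) (v : ℕ → Set (prodFrame Fs).W)
    (u : (prodFrame Fs).W) : Set (Fs 0).W :=
  {x1 | ∃ x : (prodFrame Fs).W, x 0 = x1 ∧ Sat (prodFrame Fs) v x (Bf m) ∧
        RleAll (prodFrame Fs) d u x}

/-- The subframe of a 1-frame induced by a nonempty set of points
(the relation is restricted to the set). -/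
def subFrame1 (F1 : Frame 1) (S : Set F1.W) (hS : S.Nonempty) : Frame 1 where
  W := S
  nonempty := ⟨⟨hS.choose, hS.choose_spec⟩⟩
  R := fun i x y => F1.R i x.val y.val

/-- The factors of the restricted product `𝔉′ = 𝔉′₁ × 𝔉₂ × … × 𝔉ₙ`,
where `𝔉′₁ = ⟨W′₁, R₁ ↾ W′₁⟩`. -/
def restrFactors (Fs : Fin (n+1) → Frame 1) (m d : ℕ) (v : ℕ → Set (prodFrame Fs).W)
    (u : (prodFrame Fs).W) (hS : (restrSet Fs m d v u).Nonempty) : Fin (n+1) → Frame 1 :=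
  Fin.cases (subFrame1 (Fs 0) (restrSet Fs m d v u) hS) (fun i => Fs i.succ)

/-- The restricted product frame `𝔉′ = 𝔉′₁ × 𝔉₂ × … × 𝔉ₙ`. -/
def restrFrame (Fs : Fin (n+1) → Frame 1) (m d : ℕ) (v : ℕ → Set (prodFrame Fs).W)
    (u : (prodFrame Fs).W) (hS : (restrSet Fs m d v u).Nonempty) : Frame (n+1) :=
  prodFrame (restrFactors Fs m d v u hS)

/-- The natural inclusion `W̄′ ⊆ W̄` of the points of `𝔉′` among those of `𝔉`. -/
def restrEmb (Fs : Fin (n+1) → Frame 1) (m d : ℕ) (v : ℕ → Set (prodFrame Fs).W)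
    (u : (prodFrame Fs).W) (hS : (restrSet Fs m d v u).Nonempty)
    (y : (restrFrame Fs m d v u hS).W) : (prodFrame Fs).W :=
  Fin.cases (motive := fun i => (Fs i).W) (y 0).val (fun i => y i.succ)

/-- A point `x̄ ∈ W̄` whose first coordinate lies in `W′₁`, viewed as a point of `W̄′`. -/
def mkRestrPt (Fs : Fin (n+1) → Frame 1) (m d : ℕ) (v : ℕ → Set (prodFrame Fs).W)
    (u : (prodFrame Fs).W) (hS : (restrSet Fs m d v u).Nonempty)
    (x : (prodFrame Fs).W) (hx : x 0 ∈ restrSet Fs m d v u) :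
    (restrFrame Fs m d v u hS).W :=
  Fin.cases (motive := fun i => ((restrFactors Fs m d v u hS) i).W)
    ⟨x 0, hx⟩ (fun i => x i.succ)

end Restriction

end ModalProducts

/-!
The translation relativises every box to `B`, and `W′₁` keeps exactly the first coordinates of
`B`-points near `ū`, so the claim goes through by induction on `θ` once we know that every point
`x̄` within `md φ` steps of `ū` whose first coordinate lies in `W′₁` satisfies `B`. For such `x̄`
take a `B`-point `x̄′` within `md φ` steps of `ū` with `x′₁ = x₁`, and let `w̄` be `ū` with its
first coordinate replaced by `x₁`. Since the relations of a product commute, paths from `ū` to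
`x̄` and to `x̄′` can be rearranged to run first along the first axis and then along the others, so
`w̄` is within `md φ` steps of `ū` and `x̄`, `x̄′` are within `md φ` steps of `w̄` along the
other axes. So `w̄ ⊨ ◇₋₁^{≤md φ}B`, the third conjunct of `A` gives `w̄ ⊨ B`, and then the second
one gives `x̄ ⊨ B`.
-/

namespace ModalProducts

variable {N n : ℕ}

section Subformulas

theorem Subformula.md_le {θ φ : MF N} (h : Subformula θ φ) : θ.md ≤ φ.md := by
  induction φ with
  | var | bot =>
    simp only [Subformula, MF.subfs, List.mem_singleton] at h
    exact h ▸ le_rfl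
  | and a b iha ihb | or a b iha ihb | imp a b iha ihb =>
    simp only [Subformula, MF.subfs, List.mem_cons, List.mem_append] at h
    rcases h with rfl | h | h
    · exact le_rfl
    · exact (iha h).trans (le_max_left _ _)
    · exact (ihb h).trans (le_max_right _ _)
  | box i a ih =>
    simp only [Subformula, MF.subfs, List.mem_cons] at h
    rcases h with rfl | h
    · exact le_rfl
    · exact (ih h).trans (Nat.le_succ _)

theorem Subformula.vars_subset {θ φ : MF N} (h : Subformula θ φ) : θ.vars ⊆ φ.vars := by
  induction φ with
  | var | bot =>
    simp only [Subformula, MF.subfs, List.mem_singleton] at h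
    exact h ▸ subset_rfl
  | and a b iha ihb | or a b iha ihb | imp a b iha ihb =>
    simp only [Subformula, MF.subfs, List.mem_cons, List.mem_append] at h
    rcases h with rfl | h | h
    · exact subset_rfl
    · exact (iha h).trans Set.subset_union_left
    · exact (ihb h).trans Set.subset_union_right
  | box i a ih =>
    simp only [Subformula, MF.subfs, List.mem_cons] at h
    rcases h with rfl | h
    · exact subset_rfl
    · exact ih h

end Subformulas

section Reachability

theorem RleAll.mono {F : Frame N} {k k' : ℕ} {x y : F.W} (h : RleAll F k x y) (hk : k ≤ k') :
    RleAll F k' x y := by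
  induction hk with
  | refl => exact h
  | step _ ih => exact Or.inl ih

theorem RleAll.tail {F : Frame N} {k : ℕ} {i : Fin N} {x y z : F.W}
    (h : RleAll F k x y) (hR : F.R i y z) : RleAll F (k+1) x z := by
  induction k generalizing x with
  | zero =>
    obtain rfl : x = y := h
    exact Or.inr ⟨i, z, hR, rfl⟩
  | succ k ih =>
    rcases h with h | ⟨j, w, hj, h⟩
    · exact Or.inl (ih h)
    · exact Or.inr ⟨j, w, hj, ih h⟩

variable {Fs : Fin N → Frame 1}

theorem prodFrame_R_update_self (t : ∀ k, (Fs k).W) {i : Fin N} {a b : (Fs i).W}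
    (h : (Fs i).R 0 a b) :
    (prodFrame Fs).R i (Function.update t i a) (Function.update t i b) :=
  ⟨by simpa using h, fun k hk => by simp [hk]⟩

theorem prodFrame_R_update {i j : Fin N} (hij : i ≠ j) {a z : ∀ k, (Fs k).W}
    (h : (prodFrame Fs).R i a z) (c : (Fs j).W) :
    (prodFrame Fs).R i (Function.update a j c) (Function.update z j c) := by
  refine ⟨by simpa [hij] using h.1, fun k hk => ?_⟩
  rcases eq_or_ne k j with rfl | hkj
  · simp
  · simp [hkj, h.2 k hk]

theorem update_eq_update_of_prodFrame_R {i : Fin N} {a z : ∀ k, (Fs k).W}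
    (h : (prodFrame Fs).R i a z) (c : (Fs i).W) :
    Function.update a i c = Function.update z i c := by
  funext k
  rcases eq_or_ne k i with rfl | hk
  · simp
  · simp [hk, h.2 k hk]

theorem RleAll.update (t : ∀ k, (Fs k).W) {i : Fin N} {k : ℕ} {a b : (Fs i).W}
    (h : RleAll (Fs i) k a b) :
    RleAll (prodFrame Fs) k (Function.update t i a) (Function.update t i b) := by
  induction k generalizing a with
  | zero =>
    obtain rfl : a = b := h
    rfl
  | succ k ih =>
    rcases h with h | ⟨j, c, hR, h⟩
    · exact Or.inl (ih h)
    · obtain rfl : j = 0 := Subsingleton.elim j 0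
      exact Or.inr ⟨i, _, prodFrame_R_update_self t hR, ih h⟩

/-- A path in a product can be rearranged to run first along the first axis, then along the
others. -/
theorem RleAll.split {Fs : Fin (n+1) → Frame 1} {k : ℕ} {a x : ∀ i, (Fs i).W}
    (h : RleAll (prodFrame Fs) k a x) :
    RleAll (Fs 0) k (a 0) (x 0) ∧ RleTail (prodFrame Fs) k (Function.update a 0 (x 0)) x := by
  induction k generalizing a with
  | zero =>
    obtain rfl : a = x := h
    exact ⟨rfl, Function.update_eq_self _ _⟩
  | succ k ih =>
    rcases h with h | ⟨i, z, hR, h⟩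
    · exact (ih h).imp Or.inl Or.inl
    obtain ⟨h0, htail⟩ := ih h
    cases i using Fin.cases with
    | zero =>
      rw [update_eq_update_of_prodFrame_R hR]
      exact ⟨Or.inr ⟨0, z 0, hR.1, h0⟩, Or.inl htail⟩
    | succ j =>
      rw [hR.2 0 (Fin.succ_ne_zero j).symm]
      exact ⟨Or.inl h0, Or.inr ⟨j, _, prodFrame_R_update (Fin.succ_ne_zero j) hR _, htail⟩⟩

end Reachability

section BoundedBoxes

variable {F : Frame (n+1)} {v : ℕ → Set F.W}

theorem sat_bigAnd {x : F.W} (ψ : MF (n+1)) (l : List (MF (n+1))) :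
    Sat F v x (bigAnd ψ l) ↔ Sat F v x ψ ∧ ∀ χ ∈ l, Sat F v x χ := by
  induction l generalizing ψ with
  | nil => simp [bigAnd]
  | cons χ l ih =>
    rw [bigAnd, List.foldl_cons, ← bigAnd, ih]
    simp only [Sat, List.forall_mem_cons, and_assoc]

theorem sat_bigAnd_ofFn_box {x : F.W} {r : ℕ} (f : Fin r → Fin (n+1)) (ψ χ : MF (n+1)) :
    Sat F v x (bigAnd ψ (List.ofFn fun i => .box (f i) χ)) ↔
      Sat F v x ψ ∧ ∀ i y, F.R (f i) x y → Sat F v y χ := by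
  simp only [sat_bigAnd, List.forall_mem_ofFn_iff, Sat]

theorem sat_boxLe {k : ℕ} {ψ : MF (n+1)} {x : F.W} :
    Sat F v x (boxLe k ψ) ↔ ∀ y, RleAll F k x y → Sat F v y ψ := by
  induction k generalizing x with
  | zero => exact ⟨fun h y hy => hy ▸ h, fun h => h x rfl⟩
  | succ k ih =>
    simp only [boxLe, sat_bigAnd_ofFn_box, ih, RleAll]
    aesop

theorem sat_boxLeTail {k : ℕ} {ψ : MF (n+1)} {x : F.W} :
    Sat F v x (boxLeTail k ψ) ↔ ∀ y, RleTail F k x y → Sat F v y ψ := by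
  induction k generalizing x with
  | zero => exact ⟨fun h y hy => hy ▸ h, fun h => h x rfl⟩
  | succ k ih =>
    simp only [boxLeTail, sat_bigAnd_ofFn_box, ih, RleTail]
    aesop

theorem sat_diaLeTail {k : ℕ} {ψ : MF (n+1)} {x : F.W} :
    Sat F v x (diaLeTail k ψ) ↔ ∃ y, RleTail F k x y ∧ Sat F v y ψ := by
  simp [diaLeTail, MF.neg, Sat, sat_boxLeTail]

end BoundedBoxes

section Restriction

variable {Fs : Fin (n+1) → Frame 1} {m d : ℕ} {v : ℕ → Set (prodFrame Fs).W}
  {u : (prodFrame Fs).W}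

theorem sat_Bf_of_mem_restrSet {φ : MF (n+1)} (hA : Sat (prodFrame Fs) v u (Af m φ))
    {x : (prodFrame Fs).W} (hx : RleAll (prodFrame Fs) φ.md u x)
    (hx0 : x 0 ∈ restrSet Fs m φ.md v u) : Sat (prodFrame Fs) v x (Bf m) := by
  obtain ⟨-, hBoxB, hDiaB⟩ := hA
  obtain ⟨x', hx'0, hx'B, hx'⟩ := hx0
  have hw : RleAll (prodFrame Fs) φ.md u (Function.update u 0 (x 0)) := by
    have h := hx'.split.1.update u
    rwa [Function.update_eq_self (f := (u : ∀ i, (Fs i).W)), hx'0] at h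
  have hwB : Sat (prodFrame Fs) v (Function.update u 0 (x 0)) (Bf m) :=
    sat_boxLe.1 hDiaB _ hw (sat_diaLeTail.2 ⟨x', hx'0 ▸ hx'.split.2, hx'B⟩)
  exact sat_boxLeTail.1 (sat_boxLe.1 hBoxB _ hw hwB) x hx.split.2

variable {hS : (restrSet Fs m d v u).Nonempty}

theorem exists_restrEmb_eq {x : (prodFrame Fs).W} (hx : x 0 ∈ restrSet Fs m d v u) :
    ∃ y, restrEmb Fs m d v u hS y = x :=
  ⟨mkRestrPt Fs m d v u hS x hx, funext fun i => Fin.cases rfl (fun _ => rfl) i⟩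

theorem restrFrame_R_iff {i : Fin (n+1)} {y z : (restrFrame Fs m d v u hS).W} :
    (restrFrame Fs m d v u hS).R i y z ↔
      (prodFrame Fs).R i (restrEmb Fs m d v u hS y) (restrEmb Fs m d v u hS z) := by
  have hstep : (restrFactors Fs m d v u hS i).R 0 (y i) (z i) ↔
      (Fs i).R 0 (restrEmb Fs m d v u hS y i) (restrEmb Fs m d v u hS z i) := by
    cases i using Fin.cases <;> exact Iff.rfl
  have hcoord : ∀ k, restrEmb Fs m d v u hS y k = restrEmb Fs m d v u hS z k ↔ y k = z k := by
    intro k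
    cases k using Fin.cases
    · exact Subtype.ext_iff.symm
    · exact Iff.rfl
  exact and_congr hstep (forall₂_congr fun k _ => (hcoord k).symm)

theorem sat_restrFrame_iff_sat_sigmaT
    (hB : ∀ x, RleAll (prodFrame Fs) d u x → x 0 ∈ restrSet Fs m d v u →
      Sat (prodFrame Fs) v x (Bf m))
    {v' : ℕ → Set (restrFrame Fs m d v u hS).W}
    (hv' : ∀ k, 1 ≤ k → k ≤ m →
      v' k = {y | Sat (prodFrame Fs) v (restrEmb Fs m d v u hS y) (betaF k)})
    {θ : MF (n+1)} (hvars : ∀ q ∈ θ.vars, 1 ≤ q ∧ q ≤ m) (hmd : θ.md ≤ d)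
    {y : (restrFrame Fs m d v u hS).W}
    (hy : RleAll (prodFrame Fs) (d - θ.md) u (restrEmb Fs m d v u hS y)) :
    Sat (restrFrame Fs m d v u hS) v' y θ ↔
      Sat (prodFrame Fs) v (restrEmb Fs m d v u hS y) (sigmaT m θ) := by
  induction θ generalizing y with
  | var q =>
    obtain ⟨hq1, hqm⟩ := hvars q rfl
    simp only [sigmaT, Sat, hv' q hq1 hqm]
    rfl
  | bot => exact Iff.rfl
  | and a b iha ihb | or a b iha ihb | imp a b iha ihb =>
    have ha := iha (fun q hq => hvars q (Or.inl hq)) ((le_max_left _ _).trans hmd)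
      (hy.mono (Nat.sub_le_sub_left (le_max_left _ _) d))
    have hb := ihb (fun q hq => hvars q (Or.inr hq)) ((le_max_right _ _).trans hmd)
      (hy.mono (Nat.sub_le_sub_left (le_max_right _ _) d))
    simp only [sigmaT, Sat, ha, hb]
  | box i ψ ih =>
    have hψ : ψ.md + 1 ≤ d := hmd
    have hreach : ∀ z, (prodFrame Fs).R i (restrEmb Fs m d v u hS y) z →
        RleAll (prodFrame Fs) (d - ψ.md) u z := fun z hz =>
      (hy.tail hz).mono (by simp only [MF.md]; omega)
    have hψ' : ψ.md ≤ d := by omega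
    simp only [sigmaT, Sat]
    constructor
    · intro h z hz hzB
      obtain ⟨z', rfl⟩ := exists_restrEmb_eq (hS := hS)
        ⟨z, rfl, hzB, (hreach z hz).mono (Nat.sub_le _ _)⟩
      exact (ih hvars hψ' (hreach _ hz)).1 (h z' (restrFrame_R_iff.2 hz))
    · intro h z hz
      rw [restrFrame_R_iff] at hz
      exact (ih hvars hψ' (hreach _ hz)).2
        (h _ hz (hB _ ((hreach _ hz).mono (Nat.sub_le _ _)) (z 0).2))

end Restriction

end ModalProducts

open ModalProducts

theorem restricted_frame_simulates_subformulas_general (n m : ℕ) (φ : MF (n+1))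
    (hvars : ∀ q ∈ φ.vars, 1 ≤ q ∧ q ≤ m)
    (Fs : Fin (n+1) → Frame 1)
    (v : ℕ → Set (prodFrame Fs).W)
    (u : (prodFrame Fs).W) (hA : Sat (prodFrame Fs) v u (Af m φ))
    (hS : (restrSet Fs m φ.md v u).Nonempty)
    (v' : ℕ → Set (restrFrame Fs m φ.md v u hS).W)
    (hv' : ∀ k, 1 ≤ k → k ≤ m →
      v' k = {y | Sat (prodFrame Fs) v (restrEmb Fs m φ.md v u hS y) (betaF k)})
    (θ : MF (n+1)) (hθ : Subformula θ φ)
    (y : (restrFrame Fs m φ.md v u hS).W)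
    (hy : RleAll (prodFrame Fs) (φ.md - θ.md) u (restrEmb Fs m φ.md v u hS y)) :
    Sat (restrFrame Fs m φ.md v u hS) v' y θ ↔
      Sat (prodFrame Fs) v (restrEmb Fs m φ.md v u hS y) (sigmaT m θ) :=
  sat_restrFrame_iff_sat_sigmaT (fun _ hx hx0 => sat_Bf_of_mem_restrSet hA hx hx0) hv'
    (fun q hq => hvars q (hθ.vars_subset hq)) hθ.md_le hy

/-- In the construction for direction (⇒) of Lemma 3.1: for every subformula `θ` of `φ`
and every point `x̄ ∈ W̄′ ∩ R̄^{≤ md φ − md θ}(ū)`: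
`𝔉′, x̄ ⊨^{v′} θ` iff `𝔉, x̄ ⊨ᵛ σ(θ)`. -/
theorem restricted_frame_simulates_subformulas (n m : ℕ) (φ : MF (n+1))
    (hvars : ∀ q ∈ φ.vars, 1 ≤ q ∧ q ≤ m)
    (Fs : Fin (n+1) → Frame 1) (hrefl : ReflexiveFrame (Fs 0))
    (v : ℕ → Set (prodFrame Fs).W)
    (u : (prodFrame Fs).W) (hA : Sat (prodFrame Fs) v u (Af m φ))
    (hS : (restrSet Fs m φ.md v u).Nonempty)
    (v' : ℕ → Set (restrFrame Fs m φ.md v u hS).W)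
    (hv' : ∀ k, 1 ≤ k → k ≤ m →
      v' k = {y | Sat (prodFrame Fs) v (restrEmb Fs m φ.md v u hS y) (betaF k)})
    (θ : MF (n+1)) (hθ : Subformula θ φ)
    (y : (restrFrame Fs m φ.md v u hS).W)
    (hy : RleAll (prodFrame Fs) (φ.md - θ.md) u (restrEmb Fs m φ.md v u hS y)) :
    Sat (restrFrame Fs m φ.md v u hS) v' y θ ↔
      Sat (prodFrame Fs) v (restrEmb Fs m φ.md v u hS y) (sigmaT m θ) :=
  restricted_frame_simulates_subformulas_general n m φ hvars Fs v u hA hS v' hv' θ hθ y hy
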